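/- arXiv:2002.07770 — 6 statements merged into one kernel-verified Lean document; each statement's English description precedes it below -/
import Mathlib

section
/- Progress: for a well-typed program ⟨D, e⟩, if a configuration C is well-typed (⊢_conf^D C), then one of the following holds: (1) there exists a configuration C' with C →_D C'; (2) C = AssertFail; (3) C = AliasFail; or (4) C = ⟨H, R, ·, x⟩ for some heap H, register file R and variable x, i.e. C is a final configuration with empty stack whose expression is a single variable. -/
namespace ConSORT

/-! ### Basic names and runtime values -/

abbrev Var := ℕ
abbrev Addr := ℕ
abbrev Label := ℕ
abbrev CtxVar := ℕ
abbrev FnName := ℕ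

/-- Runtime values: integers or heap addresses. -/
inductive Value
  | int (n : ℤ)
  | addr (a : Addr)
  deriving DecidableEq

/-- Heaps are finite maps from addresses to runtime values. -/
abbrev Heap := Finmap (fun _ : Addr => Value)

/-- Register files are finite maps from variables to runtime values. -/
abbrev RegFile := Finmap (fun _ : Var => Value)

/-! ### Refinement formulas -/

/-- Values that may occur in refinements: the value variable ν, program variables, literals. -/
inductive RVal
  | nu
  | var (x : Var)
  | int (n : ℤ)
  deriving DecidableEq

/-- Predicate contexts `C ::= ε | λ | ℓ : C`. -/
inductive PredCtx
  | eps
  | cvar (l : CtxVar)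
  | cons (lab : Label) (C : PredCtx)

def PredCtx.ofList : List Label → PredCtx
  | [] => .eps
  | lab :: ls => .cons lab (PredCtx.ofList ls)

/-- Refinement formulas. Atomic predicate symbols are modelled by
    (the semantics of) predicates over integer lists. -/
inductive Formula
  | top
  | or (p q : Formula)
  | neg (p : Formula)
  | pred (P : List ℤ → Prop) (args : List RVal)
  | eq (a b : RVal)
  | ctxP (ls : List Label) (C : PredCtx)

/-- Derived conjunction. -/
def Formula.and (p q : Formula) : Formula := .neg (.or (.neg p) (.neg q))

/-- Derived implication. -/
def Formula.imp (p q : Formula) : Formula := .or (.neg p) q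

def RVal.eval (rho : Var → ℤ) (nuv : ℤ) : RVal → ℤ
  | .nu => nuv
  | .var x => rho x
  | .int n => n

def PredCtx.evalC (kap : CtxVar → List Label) : PredCtx → List Label
  | .eps => []
  | .cvar l => kap l
  | .cons lab C => lab :: C.evalC kap

/-- Satisfaction of a formula under a valuation of program variables, the value
    variable ν, and context variables. Context query predicates are interpreted
    by the prefix relation on call strings. -/
def Formula.sat (rho : Var → ℤ) (nuv : ℤ) (kap : CtxVar → List Label) : Formula → Prop
  | .top => True
  | .or p q => p.sat rho nuv kap ∨ q.sat rho nuv kap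
  | .neg p => ¬ p.sat rho nuv kap
  | .pred P args => P (args.map (RVal.eval rho nuv))
  | .eq a b => a.eval rho nuv = b.eval rho nuv
  | .ctxP ls C => ls <+: C.evalC kap

/-- Validity: true under every valuation. -/
def Formula.valid (phi : Formula) : Prop := ∀ rho nuv kap, phi.sat rho nuv kap

def Formula.mapRV (f : RVal → RVal) : Formula → Formula
  | .top => .top
  | .or p q => .or (p.mapRV f) (q.mapRV f)
  | .neg p => .neg (p.mapRV f)
  | .pred P args => .pred P (args.map f)
  | .eq a b => .eq (f a) (f b)
  | .ctxP ls C => .ctxP ls C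

/-- `[v/ν]φ`: substitute `v` for the value variable ν. -/
def Formula.substNu (v : RVal) (phi : Formula) : Formula :=
  phi.mapRV (fun rv => if rv = .nu then v else rv)

/-- `[x'/x]φ`: rename program variable `x` to `x'`. -/
def Formula.renameVar (x' x : Var) (phi : Formula) : Formula :=
  phi.mapRV (fun rv => if rv = .var x then .var x' else rv)

/-- `[ν/z]φ`: substitute ν for the program variable `z`. -/
def Formula.varToNu (z : Var) (phi : Formula) : Formula :=
  phi.mapRV (fun rv => if rv = .var z then .nu else rv)

/-- Substitution of register-file values for variables (integer bindings only). -/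
def RVal.substReg (R : RegFile) : RVal → RVal
  | .var x =>
    match R.lookup x with
    | some (Value.int n) => .int n
    | _ => .var x
  | v => v

/-- `[R]φ`. -/
def Formula.substReg (R : RegFile) (phi : Formula) : Formula :=
  phi.mapRV (RVal.substReg R)

def PredCtx.substCV (lam : CtxVar) (C' : PredCtx) : PredCtx → PredCtx
  | .eps => .eps
  | .cvar l => if l = lam then C' else .cvar l
  | .cons lab C => .cons lab (PredCtx.substCV lam C' C)

/-- Substitution of a predicate context for a context variable in a formula. -/
def Formula.substCV (lam : CtxVar) (C' : PredCtx) : Formula → Formula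
  | .top => .top
  | .or p q => .or (p.substCV lam C') (q.substCV lam C')
  | .neg p => .neg (p.substCV lam C')
  | .pred P args => .pred P args
  | .eq a b => .eq a b
  | .ctxP ls C => .ctxP ls (PredCtx.substCV lam C' C)

def RVal.fpv : RVal → Set Var
  | .var x => {x}
  | _ => ∅

/-- Free program variables of a formula (excluding ν). -/
def Formula.fpv : Formula → Set Var
  | .top => ∅
  | .or p q => p.fpv ∪ q.fpv
  | .neg p => p.fpv
  | .pred _ args => {x | RVal.var x ∈ args}
  | .eq a b => a.fpv ∪ b.fpv
  | .ctxP _ _ => ∅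

def PredCtx.fcv : PredCtx → Set CtxVar
  | .eps => ∅
  | .cvar l => {l}
  | .cons _ C => C.fcv

/-- Free context variables of a formula. -/
def Formula.fcv : Formula → Set CtxVar
  | .top => ∅
  | .or p q => p.fcv ∪ q.fcv
  | .neg p => p.fcv
  | .pred _ _ => ∅
  | .eq _ _ => ∅
  | .ctxP _ C => C.fcv

/-! ### Types -/

/-- Ownerships: rationals in the interval [0,1]. -/
abbrev Own01 := {q : ℚ // 0 ≤ q ∧ q ≤ 1}

def oZero : Own01 := ⟨0, by norm_num⟩
def oOne : Own01 := ⟨1, by norm_num⟩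

/-- Types: refined integers and references carrying a fractional ownership. -/
inductive Ty
  | int (phi : Formula)
  | ref (t : Ty) (r : Own01)

/-- The maximal type ⊤ₙ of a chain of n references. -/
def topTy : ℕ → Ty
  | 0 => .int .top
  | n + 1 => .ref (topTy n) oZero

/-- Ownership well-formedness: every reference with ownership 0 is some ⊤ₙ. -/
def Ty.OwnWF : Ty → Prop
  | .int _ => True
  | .ref t r => (r = oZero → ∃ n, t = topTy n) ∧ t.OwnWF

/-- The shape (number of reference constructors) of a type. -/
def Ty.size : Ty → ℕ
  | .int _ => 0
  | .ref t _ => t.size + 1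

/-- Strengthening τ ∧_z ψ. -/
def Ty.strengthen (t : Ty) (z : Var) (psi : Formula) : Ty :=
  match t with
  | .int phi => .int (phi.and (psi.varToNu z))
  | .ref t' r => .ref t' r

/-- Typed equality proposition `x =_τ y`. -/
def tyEq (t : Ty) (x y : Var) : Formula :=
  match t with
  | .int _ => .eq (.var x) (.var y)
  | .ref _ _ => .top

def Ty.rename (x' x : Var) : Ty → Ty
  | .int phi => .int (phi.renameVar x' x)
  | .ref t r => .ref (t.rename x' x) r

/-- Iterated renaming: pairs are (new, old). -/
def Ty.renameAll (sig : List (Var × Var)) (t : Ty) : Ty :=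
  sig.foldr (fun p t => t.rename p.1 p.2) t

def Ty.substCV (lam : CtxVar) (C : PredCtx) : Ty → Ty
  | .int phi => .int (phi.substCV lam C)
  | .ref t r => .ref (t.substCV lam C) r

/-- Type environments: finite maps from variables to types. -/
abbrev TyEnv := Finmap (fun _ : Var => Ty)

/-- Satisfaction of the denotation ⟦Γ⟧ of a type environment under a valuation. -/
def envSat (G : TyEnv) (rho : Var → ℤ) (nuv : ℤ) (kap : CtxVar → List Label) : Prop :=
  ∀ x phi, G.lookup x = some (Ty.int phi) → (Formula.substNu (RVal.var x) phi).sat rho nuv kap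

/-- `Γ ⊨ φ` : validity of ⟦Γ⟧ ⇒ φ. -/
def EnvModels (G : TyEnv) (phi : Formula) : Prop :=
  ∀ rho nuv kap, envSat G rho nuv kap → phi.sat rho nuv kap

/-! ### Typing contexts and well-formedness -/

/-- Typing contexts: a context variable or a concrete call string. -/
inductive TyCtx
  | cvar (l : CtxVar)
  | concrete (ls : List Label)

def TyCtx.toPredCtx : TyCtx → PredCtx
  | .cvar l => .cvar l
  | .concrete ls => PredCtx.ofList ls

def TyCtx.cv : TyCtx → Set CtxVar
  | .cvar l => {l}
  | .concrete _ => ∅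

/-- Refinement well-formedness `L | Γ ⊢wf φ`. -/
def FormulaWF (L : TyCtx) (G : TyEnv) (phi : Formula) : Prop :=
  (∀ x ∈ phi.fpv, ∃ psi, G.lookup x = some (Ty.int psi)) ∧ phi.fcv ⊆ L.cv

def TyWF (L : TyCtx) (G : TyEnv) : Ty → Prop
  | .int phi => FormulaWF L G phi
  | .ref t _ => TyWF L G t

def EnvWF (L : TyCtx) (G : TyEnv) : Prop :=
  ∀ x t, G.lookup x = some t → TyWF L G t

/-! ### Subtyping and type addition -/

inductive Subty (G : TyEnv) : Ty → Ty → Prop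
  | int {phi1 phi2 : Formula} :
      (∀ rho nuv kap, envSat G rho nuv kap → phi1.sat rho nuv kap → phi2.sat rho nuv kap) →
      Subty G (.int phi1) (.int phi2)
  | ref {t1 t2 : Ty} {r1 r2 : Own01} :
      r2 ≤ r1 → Subty G t1 t2 → Subty G (.ref t1 r1) (.ref t2 r2)

/-- Environment subtyping Γ ≤ Γ'. -/
def EnvSub (G G' : TyEnv) : Prop :=
  ∀ x t', G'.lookup x = some t' → ∃ t, G.lookup x = some t ∧ Subty G t t'

/-- Result subtyping (S-Res) : `Γ₁, τ₁ ≤ Γ₂, τ₂`. -/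
def ResSub (G1 : TyEnv) (t1 : Ty) (G2 : TyEnv) (t2 : Ty) : Prop :=
  ∃ x, x ∉ G1 ∧ x ∉ G2 ∧ EnvSub (G1.insert x t1) (G2.insert x t2)

/-- Type equivalence τ ≈ τ'. -/
def TyEquiv (t1 t2 : Ty) : Prop := Subty ∅ t1 t2 ∧ Subty ∅ t2 t1

/-- Type addition τ₁ + τ₂ = τ₃, the least commutative partial operation. -/
inductive TyAdd : Ty → Ty → Ty → Prop
  | int {phi1 phi2 : Formula} : TyAdd (.int phi1) (.int phi2) (.int (phi1.and phi2))
  | ref {t1 t2 t3 : Ty} {r1 r2 r3 : Own01} :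
      TyAdd t1 t2 t3 → r1.1 + r2.1 = r3.1 →
      TyAdd (.ref t1 r1) (.ref t2 r2) (.ref t3 r3)
  | comm {t1 t2 t3 : Ty} : TyAdd t1 t2 t3 → TyAdd t2 t1 t3

/-! ### Expressions -/

inductive Expr
  | var (x : Var)
  | letVar (x y : Var) (e : Expr)
  | letInt (x : Var) (n : ℤ) (e : Expr)
  | ifz (x : Var) (e1 e2 : Expr)
  | mkref (x y : Var) (e : Expr)
  | deref (x y : Var) (e : Expr)
  | call (x : Var) (f : FnName) (lab : Label) (ys : List Var) (e : Expr)
  | assign (x y : Var) (e : Expr)        -- x := y ; e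
  | aliasVV (x y : Var) (e : Expr)       -- alias(x = y) ; e
  | aliasVD (x y : Var) (e : Expr)       -- alias(x = *y) ; e
  | assert (phi : Formula) (e : Expr)
  | seq (e1 e2 : Expr)

def substV (x' x z : Var) : Var := if z = x then x' else z

/-- `[x'/x]e`. -/
def Expr.rename (x' x : Var) : Expr → Expr
  | .var z => .var (substV x' x z)
  | .letVar z y e => .letVar (substV x' x z) (substV x' x y) (e.rename x' x)
  | .letInt z n e => .letInt (substV x' x z) n (e.rename x' x)
  | .ifz z e1 e2 => .ifz (substV x' x z) (e1.rename x' x) (e2.rename x' x)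
  | .mkref z y e => .mkref (substV x' x z) (substV x' x y) (e.rename x' x)
  | .deref z y e => .deref (substV x' x z) (substV x' x y) (e.rename x' x)
  | .call z f lab ys e => .call (substV x' x z) f lab (ys.map (substV x' x)) (e.rename x' x)
  | .assign z y e => .assign (substV x' x z) (substV x' x y) (e.rename x' x)
  | .aliasVV z y e => .aliasVV (substV x' x z) (substV x' x y) (e.rename x' x)
  | .aliasVD z y e => .aliasVD (substV x' x z) (substV x' x y) (e.rename x' x)
  | .assert phi e => .assert (phi.renameVar x' x) (e.rename x' x)
  | .seq e1 e2 => .seq (e1.rename x' x) (e2.rename x' x)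

/-- Iterated renaming: pairs are (new, old); `[y₁/x₁]⋯[yₙ/xₙ]e`. -/
def Expr.renameAll (sig : List (Var × Var)) (e : Expr) : Expr :=
  sig.foldr (fun p e => e.rename p.1 p.2) e

/-! ### Function types and typing -/

/-- Context-polymorphic function types ∀λ.⟨x:τ⟩ → ⟨x:τ' | τ⟩. -/
structure FunTy where
  cv : CtxVar
  params : List (Var × Ty)
  outs : List (Var × Ty)
  ret : Ty

abbrev FnEnv := FnName → Option FunTy

def updateAll (G : TyEnv) (ps : List (Var × Ty)) : TyEnv :=
  ps.foldl (fun D p => D.insert p.1 p.2) G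

def listToEnv (ps : List (Var × Ty)) : TyEnv := updateAll ∅ ps

/-- σα σx τ : the substitution applied to callee types at a call site labeled `lab`
    under typing context `L`, with actuals `ys`. -/
def callSubstTy (ft : FunTy) (lab : Label) (L : TyCtx) (ys : List Var) (t : Ty) : Ty :=
  Ty.substCV ft.cv (PredCtx.cons lab L.toPredCtx)
    (Ty.renameAll (ys.zip (ft.params.map Prod.fst)) t)

/-- The typing judgment Θ | L | Γ ⊢ e : τ ⊣ Γ'. -/
inductive HasTy (Th : FnEnv) : TyCtx → TyEnv → Expr → Ty → TyEnv → Prop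
  | var {L : TyCtx} {G : TyEnv} {x : Var} {t1 t2 tx : Ty} :
      G.lookup x = some tx → TyAdd t1 t2 tx →
      HasTy Th L G (.var x) t1 (G.insert x t2)
  | letVar {L : TyCtx} {G G' : TyEnv} {x y : Var} {e : Expr} {t1 t2 ty t : Ty} :
      G.lookup y = some ty → TyAdd t1 t2 ty → x ∉ G →
      HasTy Th L
        ((G.insert y (t1.strengthen y (tyEq t1 y x))).insert x
          (t2.strengthen x (tyEq t2 x y))) e t G' →
      x ∉ G' →
      HasTy Th L G (.letVar x y e) t G'
  | letInt {L : TyCtx} {G G' : TyEnv} {x : Var} {n : ℤ} {e : Expr} {t : Ty} :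
      x ∉ G →
      HasTy Th L (G.insert x (.int (.eq .nu (.int n)))) e t G' →
      x ∉ G' →
      HasTy Th L G (.letInt x n e) t G'
  | ifz {L : TyCtx} {G G' : TyEnv} {x : Var} {phi : Formula} {e1 e2 : Expr} {t : Ty} :
      G.lookup x = some (.int phi) →
      HasTy Th L (G.insert x (.int (phi.and (.eq .nu (.int 0))))) e1 t G' →
      HasTy Th L (G.insert x (.int (phi.and (.neg (.eq .nu (.int 0)))))) e2 t G' →
      HasTy Th L G (.ifz x e1 e2) t G'
  | mkref {L : TyCtx} {G G' : TyEnv} {x y : Var} {e : Expr} {t1 t2 ty t : Ty} :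
      G.lookup y = some ty → TyAdd t1 t2 ty → x ∉ G →
      HasTy Th L
        ((G.insert y t1).insert x (.ref (t2.strengthen x (tyEq t2 x y)) oOne)) e t G' →
      x ∉ G' →
      HasTy Th L G (.mkref x y e) t G'
  | deref {L : TyCtx} {G G' : TyEnv} {x y : Var} {e : Expr}
      {t1 t2 t12 t' t : Ty} {r : Own01} :
      G.lookup y = some (.ref t12 r) → TyAdd t1 t2 t12 → x ∉ G →
      ((0 : ℚ) < r.1 → t' = t1.strengthen y (tyEq t1 y x)) →
      (r.1 = 0 → t' = t1) →
      HasTy Th L ((G.insert y (.ref t' r)).insert x t2) e t G' →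
      x ∉ G' →
      HasTy Th L G (.deref x y e) t G'
  | seq {L : TyCtx} {G G' G'' : TyEnv} {e1 e2 : Expr} {t' t'' : Ty} :
      HasTy Th L G e1 t' G' →
      HasTy Th L G' e2 t'' G'' →
      HasTy Th L G (.seq e1 e2) t'' G''
  | assert {L : TyCtx} {G G' : TyEnv} {phi : Formula} {e : Expr} {t : Ty} :
      EnvModels G phi →
      FormulaWF (.concrete []) G phi →
      HasTy Th L G e t G' →
      HasTy Th L G (.assert phi e) t G'
  | assign {L : TyCtx} {G G' : TyEnv} {lhs rhs : Var} {e : Expr} {t1 t2 tr t' t : Ty} :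
      G.lookup rhs = some tr → TyAdd t1 t2 tr →
      G.lookup lhs = some (.ref t' oOne) →
      t'.size = t2.size →
      HasTy Th L
        ((G.insert rhs t1).insert lhs
          (.ref (t2.strengthen lhs (tyEq t2 lhs rhs)) oOne)) e t G' →
      HasTy Th L G (.assign lhs rhs e) t G'
  | aliasVV {L : TyCtx} {G G' : TyEnv} {x y : Var} {e : Expr}
      {t1 t2 t1' t2' ts ts' t : Ty} {r1 r2 r1' r2' : Own01} :
      G.lookup x = some (.ref t1 r1) → G.lookup y = some (.ref t2 r2) →
      TyAdd (.ref t1 r1) (.ref t2 r2) ts →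
      TyAdd (.ref t1' r1') (.ref t2' r2') ts' →
      TyEquiv ts ts' →
      HasTy Th L ((G.insert x (.ref t1' r1')).insert y (.ref t2' r2')) e t G' →
      HasTy Th L G (.aliasVV x y e) t G'
  | aliasVD {L : TyCtx} {G G' : TyEnv} {x y : Var} {e : Expr}
      {t1 t2 t1' t2' ts ts' t : Ty} {r1 r2 r1' r2' r : Own01} :
      G.lookup x = some (.ref t1 r1) → G.lookup y = some (.ref (.ref t2 r2) r) →
      TyAdd (.ref t1 r1) (.ref t2 r2) ts →
      TyAdd (.ref t1' r1') (.ref t2' r2') ts' →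
      TyEquiv ts ts' →
      HasTy Th L ((G.insert x (.ref t1' r1')).insert y (.ref (.ref t2' r2') r)) e t G' →
      HasTy Th L G (.aliasVD x y e) t G'
  | sub {L : TyCtx} {G Gp Gq G' : TyEnv} {e : Expr} {tp t' : Ty} :
      EnvSub G Gp →
      HasTy Th L Gp e tp Gq →
      ResSub Gq tp G' t' →
      HasTy Th L G e t' G'
  | call {L : TyCtx} {G G' : TyEnv} {x : Var} {f : FnName} {lab : Label}
      {ys : List Var} {e : Expr} {t' : Ty} {ft : FunTy} :
      Th f = some ft →
      ys.length = ft.params.length →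
      ys.length = ft.outs.length →
      (∀ p ∈ ys.zip ft.params, G.lookup p.1 = some (callSubstTy ft lab L ys p.2.2)) →
      HasTy Th L
        ((updateAll G ((ys.zip ft.outs).map (fun p => (p.1, callSubstTy ft lab L ys p.2.2)))).insert
          x (callSubstTy ft lab L ys ft.ret)) e t' G' →
      x ∉ G' →
      HasTy Th L G (.call x f lab ys e) t' G'

/-! ### Evaluation contexts, frames and their typing -/

inductive ECtx
  | hole
  | seq (E : ECtx) (e : Expr)

def ECtx.plug : ECtx → Expr → Expr
  | .hole, e => e
  | .seq E e2, e => .seq (E.plug e) e2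

/-- Return contexts `F = E[let x = •^ℓ in e]`. -/
structure Frame where
  E : ECtx
  x : Var
  lab : Label
  e : Expr

/-- `F[z] = E[let x = z in e]`. -/
def Frame.subst (F : Frame) (z : Var) : Expr := F.E.plug (.letVar F.x z F.e)

/-- Evaluation-context typing Θ | • : τ₀ ⊣ Γ₀ | L ⊢ectx E : τ ⊣ Γ (TE-Hole, TE-Seq). -/
inductive ECtxTy (Th : FnEnv) (t0 : Ty) (G0 : TyEnv) (L : TyCtx) : ECtx → Ty → TyEnv → Prop
  | hole : ECtxTy Th t0 G0 L .hole t0 G0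
  | seq {E : ECtx} {e : Expr} {t' t'' : Ty} {G' G'' : TyEnv} :
      ECtxTy Th t0 G0 L E t' G' →
      HasTy Th L G' e t'' G'' →
      ECtxTy Th t0 G0 L (.seq E e) t'' G''

/-- Frame typing (TE-Stack): Θ | • : τ ⊣ Γ | L ⊢ectx E[let x = •^ℓ in e] : τ'' ⊣ Γ''. -/
def FrameTy (Th : FnEnv) (t : Ty) (G : TyEnv) (L : TyCtx) (F : Frame)
    (t'' : Ty) (G'' : TyEnv) : Prop :=
  ∃ t' G', ECtxTy Th t' G' L F.E t'' G'' ∧ F.x ∉ G ∧ F.x ∉ G' ∧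
    HasTy Th L (G.insert F.x t) F.e t' G'

/-! ### Programs and program typing -/

structure FunDef where
  params : List Var
  body : Expr

abbrev Defs := FnName → Option FunDef

/-- T-FunDef: a definition checks against its declared type. -/
def FunDefTy (Th : FnEnv) (ft : FunTy) (d : FunDef) : Prop :=
  d.params = ft.params.map Prod.fst ∧
  HasTy Th (.cvar ft.cv) (listToEnv ft.params) d.body ft.ret (listToEnv ft.outs)

/-- T-Funs: Θ ⊢ D. -/
def DefsTy (Th : FnEnv) (D : Defs) : Prop :=
  (∀ f, (D f).isSome ↔ (Th f).isSome) ∧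
  ∀ f d ft, D f = some d → Th f = some ft → FunDefTy Th ft d

/-- Well-formedness of a function type. -/
def FunTyWF (ft : FunTy) : Prop :=
  EnvWF (.cvar ft.cv) (listToEnv ft.params) ∧
  EnvWF (.cvar ft.cv) (listToEnv ft.outs) ∧
  TyWF (.cvar ft.cv) (listToEnv ft.outs) ft.ret

/-- ⊢wf Θ. -/
def FnEnvWF (Th : FnEnv) : Prop := ∀ f ft, Th f = some ft → FunTyWF ft

/-- T-Prog: ⊢ ⟨D, e⟩. -/
def ProgTy (D : Defs) (e : Expr) : Prop :=
  ∃ Th : FnEnv, DefsTy Th D ∧ FnEnvWF Th ∧ ∃ t G, HasTy Th (.concrete []) ∅ e t G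

/-! ### Semantic satisfaction, ownership and consistency -/

/-- SATv(H, R, v, τ). -/
def SATv (H : Heap) (R : RegFile) : Ty → Value → Prop
  | .int phi, v => ∃ n : ℤ, v = .int n ∧ (Formula.substReg R (Formula.substNu (.int n) phi)).valid
  | .ref t _, v => ∃ (a : Addr) (w : Value), v = .addr a ∧ H.lookup a = some w ∧ SATv H R t w

/-- own(H, v, τ) as a map Addr → ℚ. -/
def ownMap (H : Heap) : Ty → Value → Addr → ℚ
  | .int _, _, _ => 0
  | .ref t r, v, b =>
    match v with
    | .addr a =>
      match H.lookup a with
      | some w => (if b = a then r.1 else 0) + ownMap H t w b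
      | none => 0
    | .int _ => 0

/-- Own(H, R, Γ) = Σ_{x ∈ dom(Γ)} own(H, R(x), Γ(x)). -/
def Own (H : Heap) (R : RegFile) (G : TyEnv) (a : Addr) : ℚ :=
  (G.entries.map (fun p =>
    match R.lookup p.1 with
    | some v => ownMap H p.2 v a
    | none => 0)).sum

/-- SAT(H, R, Γ). -/
def SAT (H : Heap) (R : RegFile) (G : TyEnv) : Prop :=
  ∀ x t, G.lookup x = some t → ∃ v, R.lookup x = some v ∧ SATv H R t v

/-- Cons(H, R, Γ). -/
def Cons (H : Heap) (R : RegFile) (G : TyEnv) : Prop :=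
  SAT H R G ∧ ∀ a ∈ H, Own H R G a ≤ 1

/-! ### Operational semantics -/

inductive Config
  | st (H : Heap) (R : RegFile) (S : List Frame) (e : Expr)
  | assertFail
  | aliasFail

/-- The small-step relation ⟨H,R,F⃗,e⟩ →_D C. -/
inductive Step (D : Defs) : Config → Config → Prop
  | var {H R F S x} :
      Step D (.st H R (F :: S) (.var x)) (.st H R S (F.subst x))
  | seqStep {H R S E x e} :
      Step D (.st H R S (ECtx.plug E (.seq (.var x) e))) (.st H R S (ECtx.plug E e))
  | letVar {H R S E x y x' e v} :
      x' ∉ R → R.lookup y = some v →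
      Step D (.st H R S (ECtx.plug E (.letVar x y e)))
             (.st H (R.insert x' v) S (ECtx.plug E (e.rename x' x)))
  | letInt {H R S E x x' n e} :
      x' ∉ R →
      Step D (.st H R S (ECtx.plug E (.letInt x n e)))
             (.st H (R.insert x' (.int n)) S (ECtx.plug E (e.rename x' x)))
  | ifTrue {H R S E x e1 e2} :
      R.lookup x = some (.int 0) →
      Step D (.st H R S (ECtx.plug E (.ifz x e1 e2))) (.st H R S (ECtx.plug E e1))
  | ifFalse {H R S E x n e1 e2} :
      R.lookup x = some (.int n) → n ≠ 0 →
      Step D (.st H R S (ECtx.plug E (.ifz x e1 e2))) (.st H R S (ECtx.plug E e2))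
  | mkref {H R S E x y x' a e v} :
      a ∉ H → x' ∉ R → R.lookup y = some v →
      Step D (.st H R S (ECtx.plug E (.mkref x y e)))
             (.st (H.insert a v) (R.insert x' (.addr a)) S (ECtx.plug E (e.rename x' x)))
  | deref {H R S E x y x' a e v} :
      R.lookup y = some (.addr a) → H.lookup a = some v → x' ∉ R →
      Step D (.st H R S (ECtx.plug E (.deref x y e)))
             (.st H (R.insert x' v) S (ECtx.plug E (e.rename x' x)))
  | call {H R S E x f lab ys e' d} :
      D f = some d →
      Step D (.st H R S (ECtx.plug E (.call x f lab ys e')))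
             (.st H R (⟨E, x, lab, e'⟩ :: S) (Expr.renameAll (ys.zip d.params) d.body))
  | assign {H R S E x y a e v} :
      R.lookup x = some (.addr a) → a ∈ H → R.lookup y = some v →
      Step D (.st H R S (ECtx.plug E (.assign x y e)))
             (.st (H.insert a v) R S (ECtx.plug E e))
  | aliasVV {H R S E x y e v} :
      R.lookup x = some v → R.lookup y = some v →
      Step D (.st H R S (ECtx.plug E (.aliasVV x y e))) (.st H R S (ECtx.plug E e))
  | aliasVVFail {H R S E x y e v1 v2} :
      R.lookup x = some v1 → R.lookup y = some v2 → v1 ≠ v2 →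
      Step D (.st H R S (ECtx.plug E (.aliasVV x y e))) .aliasFail
  | aliasVD {H R S E x y a e v} :
      R.lookup y = some (.addr a) → H.lookup a = some v → R.lookup x = some v →
      Step D (.st H R S (ECtx.plug E (.aliasVD x y e))) (.st H R S (ECtx.plug E e))
  | aliasVDFail {H R S E x y a e v v'} :
      R.lookup y = some (.addr a) → H.lookup a = some v → R.lookup x = some v' → v' ≠ v →
      Step D (.st H R S (ECtx.plug E (.aliasVD x y e))) .aliasFail
  | assert {H R S E phi e} :
      (Formula.substReg R phi).valid →
      Step D (.st H R S (ECtx.plug E (.assert phi e))) (.st H R S (ECtx.plug E e))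
  | assertFail {H R S E phi e} :
      ¬ (Formula.substReg R phi).valid →
      Step D (.st H R S (ECtx.plug E (.assert phi e))) .assertFail

/-! ### Configuration typing -/

/-- Stack typing: the stack `S`, with trace `ls`, consumes a hole of type `t`
    under environment `G`. -/
inductive StackTy (Th : FnEnv) : List Frame → List Label → Ty → TyEnv → Prop
  | nil {t : Ty} {G : TyEnv} : StackTy Th [] [] t G
  | cons {S : List Frame} {ls : List Label} {F : Frame} {t t' : Ty} {G G' : TyEnv} :
      StackTy Th S ls t' G' →
      FrameTy Th t G (.concrete ls) F t' G' →
      StackTy Th (F :: S) (F.lab :: ls) t G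

/-- Configuration typing ⊢conf^D C. -/
inductive ConfigTy (D : Defs) : Config → Prop
  | aliasFail : ConfigTy D .aliasFail
  | st {Th : FnEnv} {H : Heap} {R : RegFile} {S : List Frame} {e : Expr}
      {G Gout : TyEnv} {ls : List Label} {t : Ty} :
      DefsTy Th D →
      Cons H R G →
      StackTy Th S ls t Gout →
      HasTy Th (.concrete ls) G e t Gout →
      ConfigTy D (.st H R S e)

/-! ### Auxiliary notions used in individual lemmas -/

/-- `H ⊢ v ⇓ n` : v reaches an integer with n dereferences in H. -/
inductive Reaches (H : Heap) : Value → ℕ → Prop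
  | int {n : ℤ} : Reaches H (.int n) 0
  | addr {a : Addr} {v : Value} {n : ℕ} :
      H.lookup a = some v → Reaches H v n → Reaches H (.addr a) (n + 1)

/-- Heaps equivalent modulo the address `a`. -/
def HeapEquivMod (a : Addr) (H H' : Heap) : Prop :=
  (∀ b : Addr, b ∈ H ↔ b ∈ H') ∧
  (∀ b : Addr, b ∈ H → b ≠ a → H.lookup b = H'.lookup b) ∧
  (∀ n, Reaches H (.addr a) n ↔ Reaches H' (.addr a) n)

/-- `R ⊢vs τ` : R is a valid substitution for τ. -/
def ValidSubst (R : RegFile) : Ty → Prop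
  | .int phi => ∀ x ∈ phi.fpv, ∃ n : ℤ, R.lookup x = some (Value.int n)
  | .ref t _ => ValidSubst R t

/-- `R ⊑ R'`. -/
def RegExt (R R' : RegFile) : Prop :=
  ∀ x v, R.lookup x = some v → R'.lookup x = some v

/-- `Γ' = [ℓ⃗/λ]Γ`, characterized pointwise. -/
def EnvSubstCV (lam : CtxVar) (C : PredCtx) (G G' : TyEnv) : Prop :=
  ∀ x, G'.lookup x = (G.lookup x).map (Ty.substCV lam C)

/-- `Γ' = [x'/x]Γ`, characterized pointwise (keys and values renamed). -/
def EnvRename (x' x : Var) (G G' : TyEnv) : Prop :=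
  ∀ z, G'.lookup z =
    if z = x' then (G.lookup x).map (Ty.rename x' x)
    else if z = x then none
    else (G.lookup z).map (Ty.rename x' x)

/-! ### Auxiliary material for progress -/

/-- Shape of a value with respect to a type. -/
def Shape (H : Heap) : Ty → Value → Prop
  | .int _, v => ∃ n : ℤ, v = Value.int n
  | .ref t _, v => ∃ a w, v = Value.addr a ∧ H.lookup a = some w ∧ Shape H t w

lemma shape_of_satv (H : Heap) (R : RegFile) :
    ∀ (t : Ty) (v : Value), SATv H R t v → Shape H t v := by
  intro t
  induction t with
  | int phi => rintro v ⟨n, rfl, _⟩; exact ⟨n, rfl⟩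
  | ref t r ih => rintro v ⟨a, w, rfl, hl, hs⟩; exact ⟨a, w, rfl, hl, ih w hs⟩

lemma shape_subty {G : TyEnv} {t1 t2 : Ty} {H : Heap} {v : Value}
    (h : Subty G t1 t2) : Shape H t1 v → Shape H t2 v := by
  induction h generalizing v with
  | int _ => rintro ⟨n, rfl⟩; exact ⟨n, rfl⟩
  | ref _ _ ih => rintro ⟨a, w, rfl, hl, hs⟩; exact ⟨a, w, rfl, hl, ih hs⟩

lemma exists_fresh {α : ℕ → Type*} (M : Finmap α) : ∃ x : ℕ, x ∉ M := by
  obtain ⟨x, hx⟩ := Infinite.exists_notMem_finset M.keys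
  exact ⟨x, fun h => hx (Finmap.mem_keys.2 h)⟩

/-- Composition of evaluation contexts. -/
def ecomp : ECtx → ECtx → ECtx
  | .hole, E2 => E2
  | .seq E e, E2 => .seq (ecomp E E2) e

lemma plug_ecomp (E1 E2 : ECtx) (x : Expr) :
    ECtx.plug (ecomp E1 E2) x = ECtx.plug E1 (ECtx.plug E2 x) := by
  induction E1 <;> simp [ecomp, ECtx.plug, *]

lemma progress_aux (D : Defs) {Th : FnEnv} {L : TyCtx} {G : TyEnv} {e : Expr}
    {t : Ty} {G' : TyEnv} (ht : HasTy Th L G e t G') :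
    ∀ (H : Heap) (R : RegFile),
      (∀ x tx, G.lookup x = some tx → ∃ v, R.lookup x = some v ∧ Shape H tx v) →
      (∀ f ft, Th f = some ft → ∃ d, D f = some d) →
      (∃ x, e = .var x) ∨
        ∀ (E : ECtx) (S : List Frame), ∃ C', Step D (.st H R S (ECtx.plug E e)) C' := by
  induction ht with
  | var hx _ => intro H R good hfn; exact Or.inl ⟨_, rfl⟩
  | letVar hy _ _ _ _ =>
    intro H R good hfn
    obtain ⟨v, hv, -⟩ := good _ _ hy
    obtain ⟨x', hx'⟩ := exists_fresh R
    exact Or.inr fun E S => ⟨_, Step.letVar hx' hv⟩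
  | letInt _ _ _ =>
    intro H R good hfn
    obtain ⟨x', hx'⟩ := exists_fresh R
    exact Or.inr fun E S => ⟨_, Step.letInt hx'⟩
  | ifz hx _ _ _ _ =>
    intro H R good hfn
    obtain ⟨v, hv, n, rfl⟩ := good _ _ hx
    refine Or.inr fun E S => ?_
    by_cases hn : n = 0
    · subst hn; exact ⟨_, Step.ifTrue hv⟩
    · exact ⟨_, Step.ifFalse hv hn⟩
  | mkref hy _ _ _ _ _ =>
    intro H R good hfn
    obtain ⟨v, hv, -⟩ := good _ _ hy
    obtain ⟨a, ha⟩ := exists_fresh H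
    obtain ⟨x', hx'⟩ := exists_fresh R
    exact Or.inr fun E S => ⟨_, Step.mkref ha hx' hv⟩
  | deref hy _ _ _ _ _ _ _ =>
    intro H R good hfn
    obtain ⟨v, hv, a, w, rfl, hla, -⟩ := good _ _ hy
    obtain ⟨x', hx'⟩ := exists_fresh R
    exact Or.inr fun E S => ⟨_, Step.deref hv hla hx'⟩
  | seq h1 _ ih1 _ =>
    intro H R good hfn
    refine Or.inr fun E S => ?_
    rcases ih1 H R good hfn with ⟨x, rfl⟩ | hstep
    · exact ⟨_, Step.seqStep⟩
    · obtain ⟨C', hC'⟩ := hstep (ecomp E (.seq .hole _)) S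
      rw [plug_ecomp] at hC'
      exact ⟨C', hC'⟩
  | assert _ _ _ _ =>
    intro H R good hfn
    refine Or.inr fun E S => ?_
    exact (Classical.em _).elim (fun hv => ⟨_, Step.assert hv⟩)
      (fun hv => ⟨_, Step.assertFail hv⟩)
  | assign hr _ hl _ _ _ =>
    intro H R good hfn
    obtain ⟨v1, hv1, a, w, rfl, hla, -⟩ := good _ _ hl
    obtain ⟨v2, hv2, -⟩ := good _ _ hr
    have ha : a ∈ H := by
      rw [← Finmap.lookup_isSome, hla]; rfl
    exact Or.inr fun E S => ⟨_, Step.assign hv1 ha hv2⟩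
  | aliasVV hx hy _ _ _ _ _ =>
    intro H R good hfn
    obtain ⟨v1, hv1, -⟩ := good _ _ hx
    obtain ⟨v2, hv2, -⟩ := good _ _ hy
    refine Or.inr fun E S => ?_
    by_cases hvv : v1 = v2
    · subst hvv; exact ⟨_, Step.aliasVV hv1 hv2⟩
    · exact ⟨_, Step.aliasVVFail hv1 hv2 hvv⟩
  | aliasVD hx hy _ _ _ _ _ =>
    intro H R good hfn
    obtain ⟨v1, hv1, -⟩ := good _ _ hx
    obtain ⟨v2, hv2, a, w, rfl, hla, -⟩ := good _ _ hy
    refine Or.inr fun E S => ?_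
    by_cases hvv : v1 = w
    · subst hvv; exact ⟨_, Step.aliasVD hv2 hla hv1⟩
    · exact ⟨_, Step.aliasVDFail hv2 hla hv1 hvv⟩
  | sub hsub _ _ ih =>
    intro H R good hfn
    refine ih H R ?_ hfn
    intro x tx hx
    obtain ⟨t0, hG, hst⟩ := hsub x tx hx
    obtain ⟨v, hv, hs⟩ := good x t0 hG
    exact ⟨v, hv, shape_subty hst hs⟩
  | call hft _ _ _ _ _ _ =>
    intro H R good hfn
    obtain ⟨d, hd⟩ := hfn _ _ hft
    exact Or.inr fun E S => ⟨_, Step.call hd⟩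

/-- Progress. -/
theorem progress (D : Defs) (e : Expr) (h : ProgTy D e)
    (C : Config) (hC : ConfigTy D C) :
    (∃ C', Step D C C') ∨ C = Config.assertFail ∨ C = Config.aliasFail ∨
      ∃ (H : Heap) (R : RegFile) (x : Var), C = Config.st H R [] (Expr.var x) := by
  cases hC with
  | aliasFail => exact Or.inr (Or.inr (Or.inl rfl))
  | @st Th H R S e0 G Gout ls t hD hcons hstack hty =>
    have good : ∀ x tx, G.lookup x = some tx → ∃ v, R.lookup x = some v ∧ Shape H tx v := by
      intro x tx hx
      obtain ⟨v, hv, hsat⟩ := hcons.1 x tx hx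
      exact ⟨v, hv, shape_of_satv H R tx v hsat⟩
    have hfn : ∀ f ft, Th f = some ft → ∃ d, D f = some d := by
      intro f ft hft
      have : (D f).isSome := (hD.1 f).2 (by rw [hft]; rfl)
      exact Option.isSome_iff_exists.1 this
    rcases progress_aux D hty H R good hfn with ⟨x, rfl⟩ | hstep
    · cases S with
      | nil => exact Or.inr (Or.inr (Or.inr ⟨H, R, x, rfl⟩))
      | cons F S' => exact Or.inl ⟨_, Step.var⟩
    · obtain ⟨C', hC'⟩ := hstep .hole S
      exact Or.inl ⟨C', hC'⟩

end ConSORT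
end

section
/- Decomposition of a well-typed expression at an evaluation context: for any evaluation context E and expression e' such that E[e'] = e, if Θ | L | Γ ⊢ e : τ ⊣ Γ', then there exist a type τ0 and a type environment Γ0 such that Θ | • : τ0 ⊣ Γ0 | L ⊢_ectx E : τ ⊣ Γ' and Θ | L | Γ ⊢ e' : τ0 ⊣ Γ0. -/
namespace ConSORT

theorem Subty.refl (G : TyEnv) : ∀ t, Subty G t t
  | .int _ => .int (fun _ _ _ _ h => h)
  | .ref t _ => .ref le_rfl (Subty.refl G t)

theorem EnvSub.refl (G : TyEnv) : EnvSub G G :=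
  fun _ t h => ⟨t, h, Subty.refl _ _⟩

theorem ResSub.refl (G : TyEnv) (t : Ty) : ResSub G t G t := by
  obtain ⟨x, hx⟩ := Infinite.exists_notMem_finset G.keys
  exact ⟨x, hx, hx, EnvSub.refl _⟩

theorem seq_inv {Th : FnEnv} {L : TyCtx} {G G' : TyEnv} {e1 e2 : Expr} {t : Ty}
    (h : HasTy Th L G (.seq e1 e2) t G') :
    ∃ tm Gm, HasTy Th L G e1 tm Gm ∧ HasTy Th L Gm e2 t G' := by
  generalize he : Expr.seq e1 e2 = e at h
  induction h
  case seq h1 h2 _ _ =>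
    cases he
    exact ⟨_, _, h1, h2⟩
  case sub hsub _ hres ih =>
    obtain ⟨tm, Gm, ha, hb⟩ := ih he
    exact ⟨tm, Gm, .sub hsub ha (ResSub.refl _ _),
      .sub (EnvSub.refl _) hb hres⟩
  all_goals exact absurd he (by simp)

/-- Decomposition of a well-typed expression at an evaluation context. -/
theorem decomposition (Th : FnEnv) (L : TyCtx) (G G' : TyEnv) (E : ECtx)
    (e e' : Expr) (t : Ty)
    (hplug : E.plug e' = e) (h : HasTy Th L G e t G') :
    ∃ t0 G0, ECtxTy Th t0 G0 L E t G' ∧ HasTy Th L G e' t0 G0 := by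
  induction E generalizing e t G' with
  | hole =>
    cases hplug
    exact ⟨t, G', .hole, h⟩
  | seq E e2 ih =>
    cases hplug
    obtain ⟨tm, Gm, h1, h2⟩ := seq_inv h
    obtain ⟨t0, G0, hE, he'⟩ := ih _ _ _ rfl h1
    exact ⟨t0, G0, .seq hE h2, he'⟩

end ConSORT
end

section
/- Plugging a well-typed expression into a well-typed evaluation context yields a well-typed expression: if Θ | • : τ ⊣ Γ' | L ⊢_ectx E : τ'' ⊣ Γ'' and Θ | L | Γ ⊢ e : τ ⊣ Γ' for some Γ, then Θ | L | Γ ⊢ E[e] : τ'' ⊣ Γ''. -/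
namespace ConSORT

/-- Plugging a well-typed expression into a well-typed evaluation
    context yields a well-typed expression. -/
theorem plug_well_typed (Th : FnEnv) (L : TyCtx) (G G' G'' : TyEnv) (E : ECtx)
    (e : Expr) (t t'' : Ty)
    (hE : ECtxTy Th t G' L E t'' G'') (he : HasTy Th L G e t G') :
    HasTy Th L G (E.plug e) t'' G'' := by
  induction hE with
  | hole => exact he
  | seq _ h2 ih => exact HasTy.seq ih h2

end ConSORT
end

section
/- Subtyping preserves consistency: if Γ ≤ Γ' and Cons(H, R, Γ), then: (1) Own(H,R,Γ')(a) ≤ 1 for every a ∈ dom(H); (2) for any types with Γ ⊢ τ ≤ τ', SATv(H,R,v,τ) implies SATv(H,R,v,τ'); (3) SAT(H,R,Γ'); and therefore (4) Cons(H,R,Γ'). -/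
namespace ConSORT

/-! ### Auxiliary lemmas -/

lemma sat_mapRV {f : RVal → RVal} {rho rho' : Var → ℤ} {nuv nuv' : ℤ} {kap : CtxVar → List Label}
    (h : ∀ rv : RVal, (f rv).eval rho nuv = rv.eval rho' nuv') :
    ∀ phi : Formula, (phi.mapRV f).sat rho nuv kap ↔ phi.sat rho' nuv' kap := by
  intro phi
  induction phi with
  | top => simp [Formula.mapRV, Formula.sat]
  | or p q ihp ihq => simp [Formula.mapRV, Formula.sat, ihp, ihq]
  | neg p ih => simp [Formula.mapRV, Formula.sat, ih]
  | pred P args =>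
      simp only [Formula.mapRV, Formula.sat, List.map_map]
      have : args.map (RVal.eval rho nuv ∘ f) = args.map (RVal.eval rho' nuv') :=
        List.map_congr_left (fun rv _ => h rv)
      rw [this]
  | eq a b => simp [Formula.mapRV, Formula.sat, h]
  | ctxP ls C => simp [Formula.mapRV, Formula.sat]

/-- Valuation induced by a register file. -/
def rhoOf (R : RegFile) (rho : Var → ℤ) (x : Var) : ℤ :=
  match R.lookup x with
  | some (Value.int n) => n
  | _ => rho x

lemma substReg_sat {R : RegFile} {rho : Var → ℤ} {nuv : ℤ} {kap : CtxVar → List Label}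
    (phi : Formula) :
    (Formula.substReg R phi).sat rho nuv kap ↔ phi.sat (rhoOf R rho) nuv kap := by
  apply sat_mapRV
  intro rv
  cases rv with
  | nu => rfl
  | int n => rfl
  | var x =>
      simp only [RVal.substReg]
      cases h : R.lookup x with
      | none => simp [RVal.eval, rhoOf, h]
      | some v => cases v <;> simp [RVal.eval, rhoOf, h]

lemma substNu_int_sat {n : ℤ} {rho : Var → ℤ} {nuv : ℤ} {kap : CtxVar → List Label}
    (phi : Formula) :
    (Formula.substNu (.int n) phi).sat rho nuv kap ↔ phi.sat rho n kap := by
  apply sat_mapRV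
  intro rv
  cases rv <;> simp [RVal.eval]

lemma substNu_var_sat {x : Var} {rho : Var → ℤ} {nuv : ℤ} {kap : CtxVar → List Label}
    (phi : Formula) :
    (Formula.substNu (.var x) phi).sat rho nuv kap ↔ phi.sat rho (rho x) kap := by
  apply sat_mapRV
  intro rv
  cases rv <;> simp [RVal.eval]

lemma envSat_rhoOf {H : Heap} {R : RegFile} {G : TyEnv} (hSAT : SAT H R G)
    (rho : Var → ℤ) (nuv : ℤ) (kap : CtxVar → List Label) :
    envSat G (rhoOf R rho) nuv kap := by
  intro x phi hx
  obtain ⟨v, hv, hsv⟩ := hSAT x _ hx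
  obtain ⟨m, rfl, hval⟩ := hsv
  have hx' : rhoOf R rho x = m := by simp [rhoOf, hv]
  rw [substNu_var_sat, hx']
  have := hval rho nuv kap
  rw [substReg_sat, substNu_int_sat] at this
  exact this

lemma satv_mono {H : Heap} {R : RegFile} {G : TyEnv} (hSAT : SAT H R G)
    {t t' : Ty} (hsub : Subty G t t') :
    ∀ v : Value, SATv H R t v → SATv H R t' v := by
  induction hsub with
  | @int phi1 phi2 himp =>
      intro v hv
      obtain ⟨n, rfl, hval⟩ := hv
      refine ⟨n, rfl, ?_⟩
      intro rho nuv kap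
      rw [substReg_sat, substNu_int_sat]
      have h1 := hval rho nuv kap
      rw [substReg_sat, substNu_int_sat] at h1
      exact himp _ _ _ (envSat_rhoOf hSAT rho n kap) h1
  | @ref t1 t2 r1 r2 hr hsub ih =>
      intro v hv
      obtain ⟨a, w, rfl, ha, hw⟩ := hv
      exact ⟨a, w, rfl, ha, ih w hw⟩

lemma ownMap_nonneg (H : Heap) (b : Addr) : ∀ (t : Ty) (v : Value), 0 ≤ ownMap H t v b := by
  intro t
  induction t with
  | int phi => intro v; simp [ownMap]
  | ref t r ih =>
      intro v
      cases v with
      | int n => simp [ownMap]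
      | addr a =>
          simp only [ownMap]
          cases h : H.lookup a with
          | none => simp
          | some w =>
              have := ih w
              have hr := r.2.1
              positivity

lemma ownMap_mono {H : Heap} {G : TyEnv} {b : Addr} {t t' : Ty} (hsub : Subty G t t') :
    ∀ v : Value, ownMap H t' v b ≤ ownMap H t v b := by
  induction hsub with
  | int _ => intro v; simp [ownMap]
  | @ref t1 t2 r1 r2 hr hsub ih =>
      intro v
      cases v with
      | int n => simp [ownMap]
      | addr a =>
          simp only [ownMap]
          cases h : H.lookup a with
          | none => simp
          | some w =>
              refine add_le_add ?_ (ih w)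
              split <;> simp [hr]

/-- Pointwise term of the ownership sum. -/
def ownTerm (H : Heap) (R : RegFile) (a : Addr) (G : TyEnv) (x : Var) : ℚ :=
  match G.lookup x, R.lookup x with
  | some t, some v => ownMap H t v a
  | _, _ => 0

lemma Own_eq_sum (H : Heap) (R : RegFile) (G : TyEnv) (a : Addr) :
    Own H R G a = ∑ x ∈ G.keys, ownTerm H R a G x := by
  unfold Own
  rw [Finset.sum]
  show _ = Multiset.sum (Multiset.map _ G.keys.val)
  have hkeys : G.keys.val = G.entries.map Sigma.fst := rfl
  rw [hkeys, Multiset.map_map]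
  apply congrArg
  apply Multiset.map_congr rfl
  intro p hp
  have hlk : G.lookup p.1 = some p.2 := by
    rw [Finmap.lookup_eq_some_iff]
    exact hp
  simp only [Function.comp, ownTerm, hlk]
  cases h : R.lookup p.1 <;> simp

lemma ownTerm_nonneg (H : Heap) (R : RegFile) (a : Addr) (G : TyEnv) (x : Var) :
    0 ≤ ownTerm H R a G x := by
  unfold ownTerm
  rcases G.lookup x with _ | t <;> rcases R.lookup x with _ | v <;>
    simp [ownMap_nonneg]

lemma Own_mono {H : Heap} {R : RegFile} {G G' : TyEnv} (hsub : EnvSub G G') (a : Addr) :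
    Own H R G' a ≤ Own H R G a := by
  rw [Own_eq_sum, Own_eq_sum]
  have hsubkeys : G'.keys ⊆ G.keys := by
    intro x hx
    rw [Finmap.mem_keys, Finmap.mem_iff] at hx ⊢
    obtain ⟨t', ht'⟩ := hx
    obtain ⟨t, ht, _⟩ := hsub x t' ht'
    exact ⟨t, ht⟩
  calc ∑ x ∈ G'.keys, ownTerm H R a G' x
      ≤ ∑ x ∈ G'.keys, ownTerm H R a G x := by
        apply Finset.sum_le_sum
        intro x _
        unfold ownTerm
        cases ht' : G'.lookup x with
        | none => simp [ownTerm_nonneg]; rcases G.lookup x with _|t <;> rcases R.lookup x with _|v <;> simp [ownMap_nonneg]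
        | some t' =>
            obtain ⟨t, ht, hs⟩ := hsub x t' ht'
            rw [ht]
            cases hR : R.lookup x with
            | none => simp
            | some v => exact ownMap_mono hs v
    _ ≤ ∑ x ∈ G.keys, ownTerm H R a G x :=
        Finset.sum_le_sum_of_subset_of_nonneg hsubkeys
          (fun x _ _ => ownTerm_nonneg H R a G x)

/-- Subtyping preserves consistency. -/
theorem subtyping_preserves_consistency (H : Heap) (R : RegFile) (G G' : TyEnv)
    (hsub : EnvSub G G') (hcons : Cons H R G) :
    (∀ a ∈ H, Own H R G' a ≤ 1) ∧
    (∀ (t t' : Ty) (v : Value), Subty G t t' → SATv H R t v → SATv H R t' v) ∧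
    SAT H R G' ∧
    Cons H R G' := by
  obtain ⟨hSAT, hOwn⟩ := hcons
  have h2 : ∀ (t t' : Ty) (v : Value), Subty G t t' → SATv H R t v → SATv H R t' v :=
    fun t t' v hs hv => satv_mono hSAT hs v hv
  have h1 : ∀ a ∈ H, Own H R G' a ≤ 1 :=
    fun a ha => le_trans (Own_mono hsub a) (hOwn a ha)
  have h3 : SAT H R G' := by
    intro x t' ht'
    obtain ⟨t, ht, hs⟩ := hsub x t' ht'
    obtain ⟨v, hv, hsv⟩ := hSAT x t ht
    exact ⟨v, hv, h2 t t' v hs hsv⟩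
  exact ⟨h1, h2, h3, ⟨h3, h1⟩⟩


end ConSORT
end

section
/- Ownership distributes over type addition: if τp = τ1 + τ2 (the type addition is defined), then for every heap H and value v, own(H, v, τp) = own(H, v, τ1) + own(H, v, τ2), where the addition of ownership maps O1, O2 : Addr → [0,1] is pointwise. -/
namespace ConSORT

/-- Ownership distributes over type addition. -/
theorem own_distributes_over_add (t1 t2 tp : Ty) (h : TyAdd t1 t2 tp) :
    ∀ (H : Heap) (v : Value) (a : Addr),
      ownMap H tp v a = ownMap H t1 v a + ownMap H t2 v a := by
  induction h with
  | int => intro H v a; cases v <;> simp [ownMap]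
  | @ref t1 t2 t3 r1 r2 r3 hadd hr ih =>
      intro H v a
      cases v with
      | int => simp [ownMap]
      | addr b =>
        simp only [ownMap]
        cases hw : H.lookup b with
        | none => simp
        | some w => simp [ih]; rw [← hr]; split <;> ring
  | comm hadd ih => intro H v a; rw [ih]; ring

end ConSORT
end

section
/- Satisfiability distributes over type addition: if τp = τ1 + τ2 (the type addition is defined), then for every heap H, register file R and value v, SATv(H,R,v,τp) holds if and only if both SATv(H,R,v,τ1) and SATv(H,R,v,τ2) hold. -/
namespace ConSORT

lemma Formula.mapRV_and (f : RVal → RVal) (p q : Formula) :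
    (p.and q).mapRV f = (p.mapRV f).and (q.mapRV f) := rfl

lemma Formula.sat_and (rho nuv kap) (p q : Formula) :
    (p.and q).sat rho nuv kap ↔ p.sat rho nuv kap ∧ q.sat rho nuv kap := by
  simp only [Formula.and, Formula.sat]
  tauto

lemma Formula.valid_and (p q : Formula) :
    (p.and q).valid ↔ p.valid ∧ q.valid := by
  constructor
  · intro h
    exact ⟨fun rho nuv kap => ((Formula.sat_and rho nuv kap p q).1 (h rho nuv kap)).1,
           fun rho nuv kap => ((Formula.sat_and rho nuv kap p q).1 (h rho nuv kap)).2⟩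
  · intro ⟨hp, hq⟩ rho nuv kap
    exact (Formula.sat_and rho nuv kap p q).2 ⟨hp rho nuv kap, hq rho nuv kap⟩

/-- Satisfiability distributes over type addition. -/
theorem satv_distributes_over_add (t1 t2 tp : Ty) (h : TyAdd t1 t2 tp) :
    ∀ (H : Heap) (R : RegFile) (v : Value),
      SATv H R tp v ↔ SATv H R t1 v ∧ SATv H R t2 v := by
  induction h with
  | @int phi1 phi2 =>
    intro H R v
    simp only [SATv, Formula.substNu, Formula.substReg, Formula.mapRV_and,
      Formula.valid_and]
    constructor
    · rintro ⟨n, rfl, h1, h2⟩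
      exact ⟨⟨n, rfl, h1⟩, ⟨n, rfl, h2⟩⟩
    · rintro ⟨⟨n, rfl, h1⟩, ⟨m, hm, h2⟩⟩
      cases hm
      exact ⟨n, rfl, h1, h2⟩
  | @ref ta tb tc r1 r2 r3 _ _ ih =>
    intro H R v
    simp only [SATv]
    constructor
    · rintro ⟨a, w, rfl, hw, hs⟩
      obtain ⟨h1, h2⟩ := (ih H R w).1 hs
      exact ⟨⟨a, w, rfl, hw, h1⟩, ⟨a, w, rfl, hw, h2⟩⟩
    · rintro ⟨⟨a, w, rfl, hw, h1⟩, ⟨a', w', ha, hw', h2⟩⟩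
      cases ha
      rw [hw] at hw'
      cases hw'
      exact ⟨a, w, rfl, hw, (ih H R w).2 ⟨h1, h2⟩⟩
  | comm _ ih =>
    intro H R v
    rw [ih H R v, and_comm]

end ConSORT
end
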